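/- Let G be a finite median graph with α_3(G) > α_2(G), and let G' be obtained from G by attaching m pendant vertices, where m ≥ α_2(G) − α_1(G) + 1. Then G' is a median graph whose cube polynomial C(G',x) = C(G,x) + m·(x+1) is not unimodal. -/

import Mathlib

open SimpleGraph Polynomial

/-- The hypercube `Q_n`: vertices are functions `Fin n → Bool`, two vertices adjacent
iff they differ in exactly one coordinate. -/
def hypercube (n : ℕ) : SimpleGraph (Fin n → Bool) where
  Adj x y := ∃! i, x i ≠ y i
  symm := by
    constructor
    rintro x y ⟨i, hi, hu⟩
    exact ⟨i, hi.symm, fun j hj => hu j hj.symm⟩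
  loopless := by
    constructor
    rintro x ⟨i, hi, -⟩
    exact hi rfl

/-- `f` is an isometric embedding of `G` into `H` (distances are preserved); its image is
an isometric subgraph of `H`. -/
def IsIsometricEmbedding {V W : Type*} (G : SimpleGraph V) (H : SimpleGraph W)
    (f : V → W) : Prop :=
  Function.Injective f ∧ ∀ u v : V, H.dist (f u) (f v) = G.dist u v

/-- A partial cube: a connected graph isomorphic to an isometric subgraph of some hypercube. -/
def IsPartialCube {V : Type*} (G : SimpleGraph V) : Prop :=
  G.Connected ∧ ∃ (n : ℕ) (f : V → (Fin n → Bool)), IsIsometricEmbedding G (hypercube n) f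

/-- The Djoković–Winkler relation on (unordered) edges: `e = uv` and `f = xy` are related iff
`d(u,x) + d(v,y) ≠ d(u,y) + d(v,x)`. -/
def DWRel {V : Type*} (G : SimpleGraph V) (e f : Sym2 V) : Prop :=
  ∃ u v x y : V, e = s(u, v) ∧ f = s(x, y) ∧
    G.dist u x + G.dist v y ≠ G.dist u y + G.dist v x

/-- The set of edges of `G` that are Θ-related to `e`. -/
def thetaClassOf {V : Type*} (G : SimpleGraph V) (e : Sym2 V) : Set (Sym2 V) :=
  {f | f ∈ G.edgeSet ∧ DWRel G e f}

/-- `C` is a Θ-class of `G`: the class of some edge of `G` under the Djoković–Winkler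
relation. -/
def IsThetaClass {V : Type*} (G : SimpleGraph V) (C : Set (Sym2 V)) : Prop :=
  ∃ e ∈ G.edgeSet, C = thetaClassOf G e

/-- `W_{uv}`: the set of vertices strictly closer to `u` than to `v`. -/
def sideW {V : Type*} (G : SimpleGraph V) (u v : V) : Set V :=
  {w | G.dist u w < G.dist v w}

/-- Two Θ-classes `C₁ = F_{ab}` and `C₂ = F_{uv}` cross: all four sets
`W_{ab} ∩ W_{uv}`, `W_{ba} ∩ W_{uv}`, `W_{ab} ∩ W_{vu}`, `W_{ba} ∩ W_{vu}` are nonempty. -/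
def Crosses {V : Type*} (G : SimpleGraph V) (C₁ C₂ : Set (Sym2 V)) : Prop :=
  ∃ a b u v : V, G.Adj a b ∧ G.Adj u v ∧
    C₁ = thetaClassOf G s(a, b) ∧ C₂ = thetaClassOf G s(u, v) ∧
    (sideW G a b ∩ sideW G u v).Nonempty ∧ (sideW G b a ∩ sideW G u v).Nonempty ∧
    (sideW G a b ∩ sideW G v u).Nonempty ∧ (sideW G b a ∩ sideW G v u).Nonempty

lemma Crosses.symm {V : Type*} {G : SimpleGraph V} {C₁ C₂ : Set (Sym2 V)}
    (h : Crosses G C₁ C₂) : Crosses G C₂ C₁ := by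
  obtain ⟨a, b, u, v, hab, huv, h1, h2, n1, n2, n3, n4⟩ := h
  refine ⟨u, v, a, b, huv, hab, h2, h1, ?_, ?_, ?_, ?_⟩ <;> rw [Set.inter_comm]
  exacts [n1, n3, n2, n4]

/-- The crossing graph `G^#` of a partial cube `G`: vertices are the Θ-classes of `G`,
two Θ-classes being adjacent iff they cross. -/
def crossingGraph {V : Type*} (G : SimpleGraph V) :
    SimpleGraph {C : Set (Sym2 V) // IsThetaClass G C} where
  Adj C₁ C₂ := C₁ ≠ C₂ ∧ Crosses G C₁.1 C₂.1
  symm := ⟨fun _ _ h => ⟨h.1.symm, h.2.symm⟩⟩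
  loopless := ⟨fun _ h => h.1 rfl⟩

/-- A median graph: a connected graph in which every triple of vertices has a unique median. -/
def IsMedianGraph {V : Type*} (G : SimpleGraph V) : Prop :=
  G.Connected ∧ ∀ u v w : V, ∃! x : V,
    G.dist u x + G.dist x v = G.dist u v ∧
    G.dist u x + G.dist x w = G.dist u w ∧
    G.dist v x + G.dist x w = G.dist v w

/-- `α_i(G)`: the number of induced subgraphs of `G` isomorphic to the `i`-cube. -/
noncomputable def cubeCount {V : Type*} (G : SimpleGraph V) (i : ℕ) : ℕ :=
  Nat.card {s : Set V // Nonempty ((G.induce s) ≃g hypercube i)}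

/-- The cube polynomial `C(G,x) = Σ_i α_i(G) xⁱ`. -/
noncomputable def cubePoly {V : Type*} [Finite V] (G : SimpleGraph V) : Polynomial ℕ :=
  ∑ i ∈ Finset.range (Nat.card V + 1), Polynomial.C (cubeCount G i) * Polynomial.X ^ i

/-- `a_i(G)`: the number of `i`-cliques of `G` (note `a_0 = 1`, the empty clique). -/
noncomputable def cliqueCount {V : Type*} (G : SimpleGraph V) (i : ℕ) : ℕ :=
  Nat.card {s : Finset V // G.IsNClique i s}

/-- The clique polynomial `Cl(G,x) = Σ_i a_i(G) xⁱ`. -/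
noncomputable def cliquePoly {V : Type*} [Finite V] (G : SimpleGraph V) : Polynomial ℕ :=
  ∑ i ∈ Finset.range (Nat.card V + 1), Polynomial.C (cliqueCount G i) * Polynomial.X ^ i

/-- A set `S` of vertices is convex: every shortest path between vertices of `S`
stays inside `S`. -/
def ConvexSet {V : Type*} (G : SimpleGraph V) (S : Set V) : Prop :=
  ∀ u ∈ S, ∀ v ∈ S, ∀ p : G.Walk u v, p.length = G.dist u v → ∀ y ∈ p.support, y ∈ S

/-- The convex hull of a vertex set: the smallest convex set containing it. -/
def gConvexHull {V : Type*} (G : SimpleGraph V) (S : Set V) : Set V :=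
  ⋂₀ {T : Set V | ConvexSet G T ∧ S ⊆ T}

/-- The Θ-class `θ` occurs in (the subgraph of `G` induced by) `S`. -/
def OccursIn {V : Type*} (G : SimpleGraph V) (θ : Set (Sym2 V)) (S : Set V) : Prop :=
  ∃ a b : V, G.Adj a b ∧ a ∈ S ∧ b ∈ S ∧ s(a, b) ∈ θ

/-- A `θ₁,θ₂`-alternating 4-cycle `u v w x u`: edges `uv, xw ∈ θ₁` and `ux, vw ∈ θ₂`. -/
def AltFourCycle {V : Type*} (G : SimpleGraph V) (θ₁ θ₂ : Set (Sym2 V)) (u v w x : V) : Prop :=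
  G.Adj u v ∧ G.Adj v w ∧ G.Adj w x ∧ G.Adj x u ∧ u ≠ w ∧ v ≠ x ∧
  s(u, v) ∈ θ₁ ∧ s(x, w) ∈ θ₁ ∧ s(u, x) ∈ θ₂ ∧ s(v, w) ∈ θ₂

/-- A polynomial with nonnegative coefficients is unimodal. -/
def PolyUnimodal (P : Polynomial ℕ) : Prop :=
  ∃ m : ℕ, (∀ i, i < m → P.coeff i ≤ P.coeff (i + 1)) ∧
    (∀ i, m ≤ i → P.coeff (i + 1) ≤ P.coeff i)

/-- The graph obtained from `G` by attaching `m` pendant vertices, the `j`-th pendant being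
joined by a single edge to the vertex `f j` of `G`. -/
def withPendants {V : Type*} (G : SimpleGraph V) (m : ℕ) (f : Fin m → V) :
    SimpleGraph (V ⊕ Fin m) where
  Adj x y := match x, y with
    | Sum.inl u, Sum.inl v => G.Adj u v
    | Sum.inl u, Sum.inr j => u = f j
    | Sum.inr j, Sum.inl v => f j = v
    | Sum.inr _, Sum.inr _ => False
  symm := by
    constructor
    rintro (u | i) (v | j) h
    · exact h.symm
    · exact h.symm
    · exact h.symm
    · exact h
  loopless := by
    constructor
    rintro (u | i) h
    · exact G.irrefl h
    · exact h

/-!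
Each vertex `x` of `G'` sits over a vertex `foot x` of `G` (itself, or the attachment vertex of a
pendant) at height `depth x ∈ {0, 1}`, and for `x ≠ y`,
`d'(x, y) = d(foot x, foot y) + depth x + depth y`. Hence the median of three distinct vertices
of `G'` is the median in `G` of their feet, because a pendant lies on no geodesic between two
other vertices. A pendant has degree one while every vertex of `Q_i`, `i ≥ 2`, has at least two
neighbours, so the only new induced cubes are the `m` new vertices and the `m` new edges:
`α₁(G') = α₁(G) + m > α₂(G) = α₂(G') < α₃(G') = α₃(G)`, a strict dip in the coefficients.
-/

def IsMedian {V : Type*} (G : SimpleGraph V) (u v w x : V) : Prop :=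
  G.dist u x + G.dist x v = G.dist u v ∧
  G.dist u x + G.dist x w = G.dist u w ∧
  G.dist v x + G.dist x w = G.dist v w

section Median

variable {V : Type*} {G : SimpleGraph V}

lemma eq_of_dist_add_dist_eq_dist_self (hc : G.Connected) {u x : V}
    (h : G.dist u x + G.dist x u = G.dist u u) : x = u :=
  hc.dist_eq_zero_iff.mp (by rw [dist_self] at h; omega)

lemma existsUnique_isMedian_of_eq_or_eq_or_eq (hc : G.Connected) {u v w : V}
    (h : u = v ∨ u = w ∨ v = w) : ∃! x, IsMedian G u v w x := by
  rcases h with rfl | rfl | rfl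
  · exact ⟨u, by simp [IsMedian], fun x hx => eq_of_dist_add_dist_eq_dist_self hc hx.1⟩
  · exact ⟨u, by simp [IsMedian, dist_comm],
      fun x hx => eq_of_dist_add_dist_eq_dist_self hc hx.2.1⟩
  · exact ⟨v, by simp [IsMedian], fun x hx => eq_of_dist_add_dist_eq_dist_self hc hx.2.2⟩

end Median

lemma hypercube_one_adj_iff {u v : Fin 1 → Bool} : (hypercube 1).Adj u v ↔ u ≠ v := by
  refine ⟨fun ⟨i, hi, _⟩ huv => hi (congrFun huv i), fun huv => ⟨0, fun h => huv ?_, ?_⟩⟩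
  · exact funext fun i => Subsingleton.elim i 0 ▸ h
  · exact fun i _ => Subsingleton.elim i 0

lemma hypercube_adj_update_not {n : ℕ} (v : Fin n → Bool) (k : Fin n) :
    (hypercube n).Adj v (Function.update v k (!v k)) := by
  refine ⟨k, by simp, fun i hi => ?_⟩
  by_contra hik
  exact hi (Function.update_of_ne hik _ _).symm

def inducedCubes {W : Type*} (H : SimpleGraph W) (i : ℕ) : Set (Set W) :=
  {S | Nonempty (H.induce S ≃g hypercube i)}

section Cubes

variable {V W : Type*} {G : SimpleGraph V} {H : SimpleGraph W} {S : Set W}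

lemma cubeCount_eq_ncard (H : SimpleGraph W) (i : ℕ) :
    cubeCount H i = (inducedCubes H i).ncard :=
  Nat.card_coe_set_eq _

lemma mem_inducedCubes_zero_iff : S ∈ inducedCubes H 0 ↔ ∃ w, S = {w} := by
  constructor
  · rintro ⟨φ⟩
    obtain ⟨w, hw⟩ := φ.symm default
    refine ⟨w, Set.eq_singleton_iff_unique_mem.mpr ⟨hw, fun y hy => ?_⟩⟩
    exact congrArg Subtype.val (φ.injective (Subsingleton.elim (φ ⟨y, hy⟩) (φ ⟨w, hw⟩)))
  · rintro ⟨w, rfl⟩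
    refine ⟨⟨Equiv.ofUnique _ _, fun {a b} => ?_⟩⟩
    rw [Subsingleton.elim a b]
    exact iff_of_false (hypercube 0).irrefl (H.induce _).irrefl

lemma cubeCount_zero_eq_card (H : SimpleGraph W) : cubeCount H 0 = Nat.card W := by
  have hcubes : inducedCubes H 0 = Set.range fun w => {w} :=
    Set.ext fun S => mem_inducedCubes_zero_iff.trans (by simp [eq_comm])
  rw [cubeCount_eq_ncard, hcubes, Set.ncard_range_of_injective Set.singleton_injective]

lemma mem_inducedCubes_one_iff : S ∈ inducedCubes H 1 ↔ ∃ a b, H.Adj a b ∧ S = {a, b} := by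
  constructor
  · rintro ⟨φ⟩
    have hcard : S.ncard = 2 := by
      rw [← Nat.card_coe_set_eq, Nat.card_congr φ.toEquiv]
      simp
    obtain ⟨a, b, hab, rfl⟩ := Set.ncard_eq_two.mp hcard
    refine ⟨a, b, ?_, rfl⟩
    have hne : φ ⟨a, by simp⟩ ≠ φ ⟨b, by simp⟩ := φ.injective.ne (by simpa using hab)
    exact φ.map_rel_iff.mp (hypercube_one_adj_iff.mpr hne)
  · rintro ⟨a, b, hab, rfl⟩
    obtain ⟨e⟩ : Nonempty (({a, b} : Set W) ≃ (Fin 1 → Bool)) :=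
      Finite.card_eq.mp (by simp [Nat.card_coe_set_eq, Set.ncard_pair hab.ne])
    refine ⟨⟨e, fun {x y} => ?_⟩⟩
    rw [hypercube_one_adj_iff, e.injective.ne_iff]
    exact ⟨fun hxy => isClique_pair.mpr (fun _ => hab) x.2 y.2 (Subtype.coe_ne_coe.mpr hxy),
      Adj.ne⟩

lemma exists_ne_adj_adj_of_mem_inducedCubes {i : ℕ} (hi : 2 ≤ i) (hS : S ∈ inducedCubes H i)
    {x : W} (hx : x ∈ S) : ∃ y ∈ S, ∃ z ∈ S, y ≠ z ∧ H.Adj x y ∧ H.Adj x z := by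
  obtain ⟨φ⟩ := hS
  let v := φ ⟨x, hx⟩
  let nbr (k : ℕ) (hk : k < i) : S := φ.symm (Function.update v ⟨k, hk⟩ (!v ⟨k, hk⟩))
  have hadj (k : ℕ) (hk : k < i) : H.Adj x (nbr k hk) := by
    have := φ.symm.map_rel_iff.mpr (hypercube_adj_update_not v ⟨k, hk⟩)
    rwa [φ.symm_apply_apply] at this
  refine ⟨nbr 0 (by omega), (nbr 0 _).2, nbr 1 (by omega), (nbr 1 _).2, fun h => ?_,
    hadj 0 _, hadj 1 _⟩
  have := congrFun (φ.symm.injective (Subtype.ext h)) ⟨0, by omega⟩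
  simp [Function.update_of_ne] at this

lemma cubeCount_eq_zero_of_card_lt [Finite W] {i : ℕ} (hi : Nat.card W < 2 ^ i) :
    cubeCount H i = 0 := by
  rw [cubeCount_eq_ncard, Set.ncard_eq_zero, Set.eq_empty_iff_forall_notMem]
  rintro S ⟨φ⟩
  have := Nat.card_le_card_of_injective _ (Subtype.val_injective (p := (· ∈ S)))
  rw [Nat.card_congr φ.toEquiv] at this
  simp at this
  omega

lemma coeff_cubePoly [Finite W] (H : SimpleGraph W) (n : ℕ) :
    (cubePoly H).coeff n = cubeCount H n := by
  rw [cubePoly, finsetSum_coeff]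
  simp only [coeff_C_mul_X_pow]
  rw [Finset.sum_ite_eq]
  split_ifs with hn
  · rfl
  · rw [Finset.mem_range, not_lt] at hn
    exact (cubeCount_eq_zero_of_card_lt (by have := n.lt_two_pow_self; omega)).symm

noncomputable def SimpleGraph.Embedding.induceImageIso (φ : G ↪g H) (s : Set V) :
    G.induce s ≃g H.induce (φ '' s) where
  toEquiv := Equiv.Set.image φ s φ.injective
  map_rel_iff' := φ.map_rel_iff

lemma image_inducedCubes (φ : G ↪g H) (i : ℕ) :
    Set.image φ '' inducedCubes G i = inducedCubes H i ∩ 𝒫 Set.range φ := by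
  ext S
  constructor
  · rintro ⟨s, ⟨ψ⟩, rfl⟩
    exact ⟨⟨(φ.induceImageIso s).symm.trans ψ⟩, Set.image_subset_range φ s⟩
  · rintro ⟨⟨ψ⟩, hS⟩
    obtain ⟨s, rfl⟩ := Set.subset_range_iff_exists_image_eq.mp hS
    exact ⟨s, ⟨(φ.induceImageIso s).trans ψ⟩, rfl⟩

lemma cubeCount_eq_add_ncard_diff [Finite W] (φ : G ↪g H) (i : ℕ) :
    cubeCount H i = cubeCount G i + (inducedCubes H i \ 𝒫 Set.range φ).ncard := by
  rw [cubeCount_eq_ncard, cubeCount_eq_ncard, ← Set.ncard_inter_add_ncard_sdiff_eq_ncard _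
    (𝒫 Set.range φ), ← image_inducedCubes, Set.ncard_image_of_injective _
    (Set.image_injective.mpr φ.injective)]

end Cubes

namespace withPendants

variable {V : Type*} {G : SimpleGraph V} {m : ℕ} {f : Fin m → V}

def foot (f : Fin m → V) : V ⊕ Fin m → V := Sum.elim id f

def depth : V ⊕ Fin m → ℕ := Sum.elim (fun _ => 0) (fun _ => 1)

def inlEmbedding (G : SimpleGraph V) (f : Fin m → V) : G ↪g withPendants G m f where
  toEmbedding := Function.Embedding.inl
  map_rel_iff' := Iff.rfl

lemma adj_inr_iff {x : V ⊕ Fin m} {j : Fin m} :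
    (withPendants G m f).Adj x (Sum.inr j) ↔ x = Sum.inl (f j) := by
  cases x <;> simp [withPendants]

lemma adj_foot_or_eq {x y : V ⊕ Fin m} (h : (withPendants G m f).Adj x y) :
    G.Adj (foot f x) (foot f y) ∨ foot f x = foot f y := by
  rcases x with u | j <;> rcases y with v | k
  exacts [Or.inl h, Or.inr h, Or.inr h, h.elim]

lemma reachable_inl_foot (x : V ⊕ Fin m) :
    (withPendants G m f).Reachable (Sum.inl (foot f x)) x := by
  rcases x with u | j
  exacts [Reachable.rfl, Adj.reachable (adj_inr_iff.mpr rfl)]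

lemma connected (hc : G.Connected) : (withPendants G m f).Connected := by
  refine (connected_iff _).mpr ⟨fun x y => ?_, ⟨Sum.inl hc.nonempty.some⟩⟩
  exact (reachable_inl_foot x).symm.trans
    (((hc _ _).map (inlEmbedding G f).toHom).trans (reachable_inl_foot y))

lemma dist_foot_le_length (hc : G.Connected) {x y : V ⊕ Fin m}
    (p : (withPendants G m f).Walk x y) : G.dist (foot f x) (foot f y) ≤ p.length := by
  induction p with
  | nil => simp
  | @cons x y z h p ih =>
    have hstep : G.dist (foot f x) (foot f y) ≤ 1 := by
      rcases adj_foot_or_eq h with h | h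
      · exact (dist_eq_one_iff_adj.mpr h).le
      · simp [h]
    rw [Walk.length_cons]
    linarith [hc.dist_triangle (u := foot f x) (v := foot f y) (w := foot f z)]

lemma dist_inl_inl (hc : G.Connected) (u v : V) :
    (withPendants G m f).dist (Sum.inl u) (Sum.inl v) = G.dist u v := by
  apply le_antisymm
  · obtain ⟨p, hp⟩ := hc.exists_walk_length_eq_dist u v
    exact (dist_le (p.map (inlEmbedding G f).toHom)).trans_eq (by rw [Walk.length_map, hp])
  · obtain ⟨p, hp⟩ := (connected hc).exists_walk_length_eq_dist (G := withPendants G m f)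
      (Sum.inl u) (Sum.inl v)
    exact hp ▸ dist_foot_le_length hc p

lemma dist_inr (hc : G.Connected) {y : V ⊕ Fin m} {j : Fin m} (hy : y ≠ Sum.inr j) :
    (withPendants G m f).dist y (Sum.inr j) =
      (withPendants G m f).dist y (Sum.inl (f j)) + 1 := by
  have hc' := connected (f := f) hc
  apply le_antisymm
  · rw [← dist_eq_one_iff_adj.mpr (adj_inr_iff.mpr rfl)]
    exact hc'.dist_triangle
  · obtain ⟨p, hp⟩ := hc'.exists_walk_length_eq_dist (Sum.inr j) y
    cases p with
    | nil => exact absurd rfl hy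
    | cons h q =>
      obtain rfl := adj_inr_iff.mp h.symm
      rw [Walk.length_cons] at hp
      rw [dist_comm (v := Sum.inr j), ← hp, dist_comm]
      exact Nat.add_le_add_right (dist_le q) 1

lemma dist_inl (hc : G.Connected) (x : V ⊕ Fin m) (w : V) :
    (withPendants G m f).dist x (Sum.inl w) = G.dist (foot f x) w + depth x := by
  rcases x with u | j
  · simp [dist_inl_inl hc, foot, depth]
  · rw [dist_comm, dist_inr hc Sum.inl_ne_inr, dist_inl_inl hc, dist_comm]
    rfl

lemma dist_eq (hc : G.Connected) {x y : V ⊕ Fin m} (hxy : x ≠ y) :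
    (withPendants G m f).dist x y = G.dist (foot f x) (foot f y) + depth x + depth y := by
  rcases y with v | k
  · simp [dist_inl hc, foot, depth]
  · rw [dist_inr hc hxy, dist_inl hc]
    rfl

lemma dist_add_two_le_dist_inr_add_dist (hc : G.Connected) {x y : V ⊕ Fin m} {j : Fin m}
    (hx : x ≠ Sum.inr j) (hy : y ≠ Sum.inr j) :
    (withPendants G m f).dist x y + 2 ≤
      (withPendants G m f).dist x (Sum.inr j) + (withPendants G m f).dist (Sum.inr j) y := by
  rw [dist_inr hc hx, dist_comm (u := Sum.inr j), dist_inr hc hy,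
    dist_comm (u := y) (v := Sum.inl (f j))]
  linarith [(connected (f := f) hc).dist_triangle (u := x) (v := Sum.inl (f j)) (w := y)]

lemma isMedian_inl_iff (hc : G.Connected) {x y z : V ⊕ Fin m} (hxy : x ≠ y) (hxz : x ≠ z)
    (hyz : y ≠ z) {w : V} :
    IsMedian (withPendants G m f) x y z (Sum.inl w) ↔
      IsMedian G (foot f x) (foot f y) (foot f z) w := by
  simp only [IsMedian, dist_eq hc hxy, dist_eq hc hxz, dist_eq hc hyz, dist_inl hc,
    dist_comm (u := (Sum.inl w : V ⊕ Fin m)), dist_comm (u := w)]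
  omega

lemma not_isMedian_inr (hc : G.Connected) {x y z : V ⊕ Fin m} (hxy : x ≠ y) (hxz : x ≠ z)
    (hyz : y ≠ z) (j : Fin m) : ¬ IsMedian (withPendants G m f) x y z (Sum.inr j) := by
  rintro ⟨hxy', hxz', hyz'⟩
  by_cases hx : x = Sum.inr j
  · subst hx
    linarith [dist_add_two_le_dist_inr_add_dist (f := f) hc hxy.symm hxz.symm]
  by_cases hy : y = Sum.inr j
  · subst hy
    linarith [dist_add_two_le_dist_inr_add_dist (f := f) hc hx hyz.symm]
  linarith [dist_add_two_le_dist_inr_add_dist (f := f) hc hx hy]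

theorem isMedianGraph (hG : IsMedianGraph G) : IsMedianGraph (withPendants G m f) := by
  obtain ⟨hc, hmed⟩ := hG
  refine ⟨connected hc, fun x y z => ?_⟩
  by_cases hdeg : x = y ∨ x = z ∨ y = z
  · exact existsUnique_isMedian_of_eq_or_eq_or_eq (connected hc) hdeg
  push Not at hdeg
  obtain ⟨hxy, hxz, hyz⟩ := hdeg
  obtain ⟨w, hw, huniq⟩ := hmed (foot f x) (foot f y) (foot f z)
  refine ⟨Sum.inl w, (isMedian_inl_iff hc hxy hxz hyz).mpr hw, ?_⟩
  rintro (w' | j) h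
  · exact congrArg Sum.inl (huniq w' ((isMedian_inl_iff hc hxy hxz hyz).mp h))
  · exact (not_isMedian_inr hc hxy hxz hyz j h).elim

lemma cubeCount_zero [Finite V] :
    cubeCount (withPendants G m f) 0 = cubeCount G 0 + m := by
  rw [cubeCount_zero_eq_card, cubeCount_zero_eq_card, Nat.card_sum, Nat.card_fin]

lemma inducedCubes_one_diff :
    inducedCubes (withPendants G m f) 1 \ 𝒫 Set.range (inlEmbedding G f) =
      Set.range fun j => {Sum.inl (f j), Sum.inr j} := by
  ext S
  simp only [Set.mem_sdiff, mem_inducedCubes_one_iff, Set.mem_powerset_iff, Set.mem_range]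
  constructor
  · rintro ⟨⟨a, b, hab, rfl⟩, hS⟩
    rcases a with u | j <;> rcases b with v | k
    · exact (hS (Set.insert_subset (Set.mem_range_self u)
        (Set.singleton_subset_iff.mpr (Set.mem_range_self v)))).elim
    · exact ⟨k, by rw [adj_inr_iff.mp hab]⟩
    · exact ⟨j, by rw [adj_inr_iff.mp hab.symm, Set.pair_comm]⟩
    · exact hab.elim
  · rintro ⟨j, rfl⟩
    refine ⟨⟨_, _, adj_inr_iff.mpr rfl, rfl⟩, fun h => ?_⟩
    obtain ⟨u, hu⟩ := h (Set.mem_insert_of_mem _ rfl)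
    exact Sum.inl_ne_inr hu

lemma cubeCount_one [Finite V] :
    cubeCount (withPendants G m f) 1 = cubeCount G 1 + m := by
  rw [cubeCount_eq_add_ncard_diff (inlEmbedding G f), inducedCubes_one_diff,
    Set.ncard_range_of_injective, Nat.card_fin]
  intro j k h
  simpa using (Set.ext_iff.mp h (Sum.inr j)).mp (by simp)

lemma cubeCount_of_two_le [Finite V] {i : ℕ} (hi : 2 ≤ i) :
    cubeCount (withPendants G m f) i = cubeCount G i := by
  rw [cubeCount_eq_add_ncard_diff (inlEmbedding G f), add_eq_left, Set.ncard_eq_zero,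
    Set.sdiff_eq_empty]
  rintro S hS (u | j) hx
  · exact Set.mem_range_self u
  obtain ⟨y, -, z, -, hyz, hy, hz⟩ := exists_ne_adj_adj_of_mem_inducedCubes hi hS hx
  exact absurd ((adj_inr_iff.mp hy.symm).trans (adj_inr_iff.mp hz.symm).symm) hyz

lemma cubePoly_eq [Finite V] :
    cubePoly (withPendants G m f) = cubePoly G + C m * (X + 1) := by
  ext n
  rw [coeff_cubePoly, coeff_add, coeff_cubePoly]
  rcases n with _ | _ | n
  · simp [cubeCount_zero]
  · simp [cubeCount_one, coeff_one]
  · simp [cubeCount_of_two_le, coeff_X, coeff_one]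

end withPendants

lemma not_polyUnimodal_of_coeff_succ_lt {P : ℕ[X]} (n : ℕ) (hl : P.coeff (n + 1) < P.coeff n)
    (hr : P.coeff (n + 1) < P.coeff (n + 2)) : ¬ PolyUnimodal P := by
  rintro ⟨k, hup, hdown⟩
  rcases le_or_gt k n with hk | hk
  · exact (hdown (n + 1) (by omega)).not_gt hr
  · exact (hup n hk).not_gt hl

/-- Let `G` be a finite median graph with `α₃(G) > α₂(G)` and let `G'` be
obtained from `G` by attaching `m ≥ α₂(G) − α₁(G) + 1` pendant vertices. Then `G'` is a
median graph whose cube polynomial `C(G',x) = C(G,x) + m·(x+1)` is not unimodal. -/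
theorem cubePoly_withPendants_not_unimodal {V : Type*} [Finite V] (G : SimpleGraph V)
    (hmed : IsMedianGraph G) (h32 : cubeCount G 2 < cubeCount G 3)
    (m : ℕ) (f : Fin m → V) (hm : cubeCount G 2 - cubeCount G 1 + 1 ≤ m) :
    IsMedianGraph (withPendants G m f) ∧
    cubePoly (withPendants G m f) = cubePoly G + Polynomial.C m * (Polynomial.X + 1) ∧
    ¬ PolyUnimodal (cubePoly (withPendants G m f)) := by
  refine ⟨withPendants.isMedianGraph hmed, withPendants.cubePoly_eq,
    not_polyUnimodal_of_coeff_succ_lt 1 ?_ ?_⟩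
  · rw [coeff_cubePoly, coeff_cubePoly, withPendants.cubeCount_one,
      withPendants.cubeCount_of_two_le le_rfl]
    omega
  · rw [coeff_cubePoly, coeff_cubePoly, withPendants.cubeCount_of_two_le le_rfl,
      withPendants.cubeCount_of_two_le (by norm_num)]
    exact h32
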